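/- Let P be a stochastically transitive distribution on S_n. Then the minimum of L_P(σ) = E_{Σ∼P}[d_τ(Σ,σ)] over σ ∈ S_n equals Σ_{i<j} min(p_{i,j}, 1 − p_{i,j}) = Σ_{i<j} (1/2 − |p_{i,j} − 1/2|). -/
import Mathlib


open Finset

/-- Kendall's τ distance. -/
def kendallTau {n : ℕ} (σ σ' : Equiv.Perm (Fin n)) : ℕ :=
  (Finset.univ.filter (fun p : Fin n × Fin n =>
    p.1 < p.2 ∧ ¬((σ p.1 < σ p.2) ↔ (σ' p.1 < σ' p.2)))).card

/-- Pairwise marginal `p_{i,j} = P(σ(i) < σ(j))`. -/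
def pairwiseMarginal {n : ℕ} (P : Equiv.Perm (Fin n) → ℝ) (i j : Fin n) : ℝ :=
  ∑ σ : Equiv.Perm (Fin n), if σ i < σ j then P σ else 0

section Aux

variable {n : ℕ} (P : Equiv.Perm (Fin n) → ℝ)

lemma marginal_self (i : Fin n) : pairwiseMarginal P i i = 0 := by
  simp [pairwiseMarginal]

lemma marginal_add (hP1 : ∑ σ : Equiv.Perm (Fin n), P σ = 1) {i j : Fin n} (hij : i ≠ j) :
    pairwiseMarginal P i j + pairwiseMarginal P j i = 1 := by
  unfold pairwiseMarginal
  rw [← Finset.sum_add_distrib, ← hP1]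
  refine Finset.sum_congr rfl fun σ _ => ?_
  have h : σ i ≠ σ j := fun h => hij (σ.injective h)
  rcases h.lt_or_gt with h | h
  · rw [if_pos h, if_neg (asymm h), add_zero]
  · rw [if_neg (asymm h), if_pos h, zero_add]

lemma sum_not_lt (hP1 : ∑ σ : Equiv.Perm (Fin n), P σ = 1) (i j : Fin n) :
    ∑ σ : Equiv.Perm (Fin n), (if ¬ (σ i < σ j) then P σ else 0) =
      1 - pairwiseMarginal P i j := by
  rw [eq_sub_iff_add_eq, pairwiseMarginal, ← Finset.sum_add_distrib, ← hP1]
  refine Finset.sum_congr rfl fun σ _ => ?_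
  by_cases h : σ i < σ j <;> simp [h]

/-- The strict total order induced by the marginals, ties broken by index. -/
def rel (i j : Fin n) : Prop :=
  1 / 2 < pairwiseMarginal P i j ∨ (pairwiseMarginal P i j = 1 / 2 ∧ i < j)

lemma rel_irrefl (i : Fin n) : ¬ rel P i i := by
  simp [rel, marginal_self]

lemma rel_ne {i j : Fin n} (h : rel P i j) : i ≠ j := by
  rintro rfl; exact rel_irrefl P i h

lemma rel_half {i j : Fin n} (h : rel P i j) : 1 / 2 ≤ pairwiseMarginal P i j := by
  rcases h with h | ⟨h, _⟩
  · exact h.le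
  · exact h.ge

lemma rel_total (hP1 : ∑ σ : Equiv.Perm (Fin n), P σ = 1) {i j : Fin n} (hij : i ≠ j) :
    rel P i j ∨ rel P j i := by
  have hadd := marginal_add P hP1 hij
  rcases lt_trichotomy (pairwiseMarginal P i j) (1 / 2) with h | h | h
  · exact Or.inr (Or.inl (by linarith))
  · rcases hij.lt_or_gt with hlt | hlt
    · exact Or.inl (Or.inr ⟨h, hlt⟩)
    · exact Or.inr (Or.inr ⟨by linarith, hlt⟩)
  · exact Or.inl (Or.inl h)

lemma rel_asymm (hP1 : ∑ σ : Equiv.Perm (Fin n), P σ = 1) {i j : Fin n}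
    (h : rel P i j) : ¬ rel P j i := by
  have hadd := marginal_add P hP1 (rel_ne P h)
  rcases h with h | ⟨h, hlt⟩ <;> rintro (h' | ⟨h', hlt'⟩) <;> first
    | linarith | exact absurd hlt (asymm hlt')

variable (hP1 : ∑ σ : Equiv.Perm (Fin n), P σ = 1)
  (hST : ∀ i j k : Fin n, 1 / 2 ≤ pairwiseMarginal P i j →
      1 / 2 ≤ pairwiseMarginal P j k → 1 / 2 ≤ pairwiseMarginal P i k)

include hP1 hST in
lemma rel_trans {i j k : Fin n} (hij : rel P i j) (hjk : rel P j k) : rel P i k := by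
  have hik : i ≠ k := by
    rintro rfl; exact rel_asymm P hP1 hij hjk
  have haik : 1 / 2 ≤ pairwiseMarginal P i k :=
    hST i j k (rel_half P hij) (rel_half P hjk)
  rcases haik.lt_or_eq with h | h
  · exact Or.inl h
  · -- tie case: p i k = 1/2
    have hki : pairwiseMarginal P k i = 1 / 2 := by
      have := marginal_add P hP1 hik; linarith
    -- show p j k = 1/2 with j < k
    have hkj : 1 / 2 ≤ pairwiseMarginal P k j :=
      hST k i j hki.ge (rel_half P hij)
    have hjk2 : pairwiseMarginal P j k = 1 / 2 := by
      have := marginal_add P hP1 (rel_ne P hjk)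
      have := rel_half P hjk
      linarith
    obtain ⟨-, hjk3⟩ : pairwiseMarginal P j k = 1 / 2 ∧ j < k := by
      rcases hjk with h' | h'
      · exact absurd h' (by rw [hjk2]; simp)
      · exact h'
    -- show p i j = 1/2 with i < j
    have hji : 1 / 2 ≤ pairwiseMarginal P j i :=
      hST j k i hjk2.ge hki.ge
    have hij2 : pairwiseMarginal P i j = 1 / 2 := by
      have := marginal_add P hP1 (rel_ne P hij)
      have := rel_half P hij
      linarith
    obtain ⟨-, hij3⟩ : pairwiseMarginal P i j = 1 / 2 ∧ i < j := by
      rcases hij with h' | h'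
      · exact absurd h' (by rw [hij2]; simp)
      · exact h'
    exact Or.inr ⟨h.symm, hij3.trans hjk3⟩

end Aux

section Aux2

variable {n : ℕ} (P : Equiv.Perm (Fin n) → ℝ)

open Classical in
lemma card_rel_lt (i : Fin n) :
    ((univ : Finset (Fin n)).filter (fun k => rel P k i)).card < n := by
  classical
  have h : (univ : Finset (Fin n)).filter (fun k => rel P k i) ⊂ univ := by
    refine Finset.ssubset_iff_of_subset (Finset.subset_univ _) |>.mpr ?_
    exact ⟨i, Finset.mem_univ i, by simp [rel_irrefl P i]⟩
  simpa using Finset.card_lt_card h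

open Classical in
noncomputable def rankF : Fin n → Fin n := fun i =>
  ⟨((univ : Finset (Fin n)).filter (fun k => rel P k i)).card, card_rel_lt P i⟩

variable (hP1 : ∑ σ : Equiv.Perm (Fin n), P σ = 1)
  (hST : ∀ i j k : Fin n, 1 / 2 ≤ pairwiseMarginal P i j →
      1 / 2 ≤ pairwiseMarginal P j k → 1 / 2 ≤ pairwiseMarginal P i k)

include hP1 hST in
lemma rankF_lt {i j : Fin n} (h : rel P i j) : rankF P i < rankF P j := by
  classical
  have hsub : (univ : Finset (Fin n)).filter (fun k => rel P k i) ⊂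
      (univ : Finset (Fin n)).filter (fun k => rel P k j) := by
    refine Finset.ssubset_iff_of_subset ?_ |>.mpr ?_
    · intro k hk
      simp only [Finset.mem_filter, Finset.mem_univ, true_and] at hk ⊢
      exact rel_trans P hP1 hST hk h
    · exact ⟨i, by simp [h], by simp [rel_irrefl P i]⟩
  exact Finset.card_lt_card hsub

include hP1 hST in
lemma rankF_bij : Function.Bijective (rankF P) := by
  rw [Finite.injective_iff_bijective.symm]
  intro i j hij
  by_contra hne
  rcases rel_total P hP1 hne with h | h
  · exact absurd hij (rankF_lt P hP1 hST h).ne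
  · exact absurd hij.symm (rankF_lt P hP1 hST h).ne

/-- The loss decomposes over pairs. -/
lemma L_eq (hP1 : ∑ σ : Equiv.Perm (Fin n), P σ = 1) (σ : Equiv.Perm (Fin n)) :
    ∑ τ : Equiv.Perm (Fin n), P τ * (kendallTau τ σ : ℝ) =
    ∑ q ∈ Finset.univ.filter (fun q : Fin n × Fin n => q.1 < q.2),
      (if σ q.1 < σ q.2 then 1 - pairwiseMarginal P q.1 q.2
        else pairwiseMarginal P q.1 q.2) := by
  classical
  have hk : ∀ τ : Equiv.Perm (Fin n), (kendallTau τ σ : ℝ) =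
      ∑ q ∈ Finset.univ.filter (fun q : Fin n × Fin n => q.1 < q.2),
        (if ¬((τ q.1 < τ q.2) ↔ (σ q.1 < σ q.2)) then (1 : ℝ) else 0) := by
    intro τ
    rw [kendallTau, ← Finset.filter_filter, Finset.card_filter]
    push_cast
    rfl
  simp_rw [hk, Finset.mul_sum]
  rw [Finset.sum_comm]
  refine Finset.sum_congr rfl fun q _ => ?_
  by_cases hσ : σ q.1 < σ q.2
  · rw [if_pos hσ]
    have he : ∀ τ : Equiv.Perm (Fin n),
        P τ * (if ¬((τ q.1 < τ q.2) ↔ (σ q.1 < σ q.2)) then (1 : ℝ) else 0) =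
        (if ¬(τ q.1 < τ q.2) then P τ else 0) := by
      intro τ; by_cases h : τ q.1 < τ q.2 <;> simp [h, hσ]
    simp_rw [he]
    exact sum_not_lt P hP1 q.1 q.2
  · rw [if_neg hσ]
    have he : ∀ τ : Equiv.Perm (Fin n),
        P τ * (if ¬((τ q.1 < τ q.2) ↔ (σ q.1 < σ q.2)) then (1 : ℝ) else 0) =
        (if τ q.1 < τ q.2 then P τ else 0) := by
      intro τ; by_cases h : τ q.1 < τ q.2 <;> simp [h, hσ]
    simp_rw [he]
    rfl

end Aux2

lemma min_abs_formula (a : ℝ) : min a (1 - a) = 1 / 2 - |a - 1 / 2| := by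
  rcases le_total a (1 / 2) with h | h
  · rw [abs_of_nonpos (by linarith), min_eq_left (by linarith)]; ring
  · rw [abs_of_nonneg (by linarith), min_eq_right (by linarith)]; ring

/-- For a (weakly) stochastically transitive distribution `P` on `S_n`, the
minimum of `L_P(σ) = E_{Σ∼P}[d_τ(Σ,σ)]` over `σ ∈ S_n` equals
`Σ_{i<j} min(p_{i,j}, 1 - p_{i,j}) = Σ_{i<j} (1/2 - |p_{i,j} - 1/2|)`. -/
theorem min_expected_kendallTau_of_stochTrans {n : ℕ}
    (P : Equiv.Perm (Fin n) → ℝ)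
    (hP0 : ∀ σ, 0 ≤ P σ) (hP1 : ∑ σ : Equiv.Perm (Fin n), P σ = 1)
    (hST : ∀ i j k : Fin n, 1 / 2 ≤ pairwiseMarginal P i j →
      1 / 2 ≤ pairwiseMarginal P j k → 1 / 2 ≤ pairwiseMarginal P i k) :
    IsLeast {x : ℝ | ∃ σ : Equiv.Perm (Fin n),
        x = ∑ τ : Equiv.Perm (Fin n), P τ * (kendallTau τ σ : ℝ)}
      (∑ p ∈ Finset.univ.filter (fun p : Fin n × Fin n => p.1 < p.2),
        min (pairwiseMarginal P p.1 p.2) (1 - pairwiseMarginal P p.1 p.2)) ∧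
    ∑ p ∈ Finset.univ.filter (fun p : Fin n × Fin n => p.1 < p.2),
        min (pairwiseMarginal P p.1 p.2) (1 - pairwiseMarginal P p.1 p.2) =
      ∑ p ∈ Finset.univ.filter (fun p : Fin n × Fin n => p.1 < p.2),
        (1 / 2 - |pairwiseMarginal P p.1 p.2 - 1 / 2|) := by
  classical
  refine ⟨⟨?_, ?_⟩, Finset.sum_congr rfl fun q _ => min_abs_formula _⟩
  · -- membership: the sorting permutation achieves the bound
    set σ₀ : Equiv.Perm (Fin n) := Equiv.ofBijective _ (rankF_bij P hP1 hST) with hσ₀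
    refine ⟨σ₀, ?_⟩
    rw [L_eq P hP1 σ₀]
    refine Finset.sum_congr rfl fun q hq => ?_
    have hq12 : q.1 < q.2 := (Finset.mem_filter.mp hq).2
    have hne : q.1 ≠ q.2 := hq12.ne
    have hco : ∀ i, σ₀ i = rankF P i := fun i => rfl
    by_cases hσ : σ₀ q.1 < σ₀ q.2
    · rw [if_pos hσ]
      have hrel : rel P q.1 q.2 := by
        rcases rel_total P hP1 hne with h | h
        · exact h
        · exact absurd hσ (by rw [hco, hco]; exact (rankF_lt P hP1 hST h).not_gt)
      have := rel_half P hrel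
      rw [min_eq_right (by linarith)]
    · rw [if_neg hσ]
      have hrel : rel P q.2 q.1 := by
        rcases rel_total P hP1 hne.symm with h | h
        · exact h
        · exact absurd ((rankF_lt P hP1 hST h)) (by rw [← hco, ← hco]; exact hσ)
      have h2 := rel_half P hrel
      have hadd := marginal_add P hP1 hne
      rw [min_eq_left (by linarith)]
  · -- lower bound
    rintro x ⟨σ, rfl⟩
    rw [L_eq P hP1 σ]
    refine Finset.sum_le_sum fun q _ => ?_
    by_cases hσ : σ q.1 < σ q.2
    · rw [if_pos hσ]; exact min_le_right _ _
    · rw [if_neg hσ]; exact min_le_left _ _
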